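/- For every y > 0, the product exp(−2(τ+1)^{ν(δ)}) · (ln(1/δ))^y tends to 0 as δ → 0⁺. -/

import Mathlib

/-!
With `u = ln(1/δ) → ∞` and `c = ln(τ+1)/ln(T+1) > 0`, the identity `a ^ (ln x / ln b) = x ^ (ln a / ln b)`
turns `(τ+1)^{ν(δ)}` into `(u/k)^c`, so the product is `exp(-2 (u/k)^c) · u^y`: a stretched exponential
beats any power of `u`.
-/

open Real Set Filter Topology

lemma Real.rpow_log_div_log_comm {a x : ℝ} (ha : 0 < a) (hx : 0 < x) (b : ℝ) :
    a ^ (log x / log b) = x ^ (log a / log b) := by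
  rw [rpow_def_of_pos ha, rpow_def_of_pos hx, mul_div_left_comm]

lemma tendsto_exp_neg_mul_rpow_mul_rpow_atTop {b c : ℝ} (hb : 0 < b) (hc : 0 < c) (y : ℝ) :
    Tendsto (fun u : ℝ => exp (-b * u ^ c) * u ^ y) atTop (𝓝 0) := by
  refine ((tendsto_rpow_mul_exp_neg_mul_atTop_nhds_zero (y / c) b hb).comp
    (tendsto_rpow_atTop hc)).congr' ?_
  filter_upwards [eventually_gt_atTop 0] with u hu
  rw [Function.comp_apply, ← rpow_mul hu.le, mul_div_cancel₀ y hc.ne', mul_comm, neg_mul]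

lemma tendsto_log_one_div_nhdsGT_zero : Tendsto (fun δ : ℝ => log (1 / δ)) (𝓝[>] 0) atTop := by
  simp only [one_div]
  exact tendsto_log_atTop.comp tendsto_inv_nhdsGT_zero

theorem exp_carleman_mul_log_pow_tendsto_zero_general
    (T k τ : ℝ) (hk : 0 < k) (hτ : τ ∈ Ioo 0 T)
    (y : ℝ) :
    Tendsto
      (fun δ : ℝ =>
        exp (-2 * (τ + 1) ^ (Real.log (Real.log (δ ^ (-(1 / k)))) / Real.log (T + 1))) *
          (Real.log (1 / δ)) ^ y)
      (nhdsWithin 0 (Ioi 0)) (nhds 0) := by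
  obtain ⟨hτ0, hτT⟩ := hτ
  set c := log (τ + 1) / log (T + 1) with hc_def
  have hc : 0 < c := div_pos (log_pos (by linarith)) (log_pos (by linarith))
  have hmodel : Tendsto (fun u : ℝ => exp (-2 * (τ + 1) ^ (log (u / k) / log (T + 1))) * u ^ y)
      atTop (𝓝 0) := by
    refine (tendsto_exp_neg_mul_rpow_mul_rpow_atTop (b := 2 / k ^ c) (by positivity) hc y).congr' ?_
    filter_upwards [eventually_gt_atTop 0] with u hu
    rw [rpow_log_div_log_comm (by linarith) (div_pos hu hk), ← hc_def, div_rpow hu.le hk.le]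
    ring_nf
  refine (hmodel.comp tendsto_log_one_div_nhdsGT_zero).congr' ?_
  filter_upwards [self_mem_nhdsWithin] with δ (hδ : 0 < δ)
  rw [Function.comp_apply, log_rpow hδ, one_div, log_inv]
  ring_nf

/-- **Lemma 3.1, part (4).** For every `y > 0`,
`exp(-2(τ+1)^{ν(δ)}) · (ln(1/δ))^y → 0` as `δ → 0⁺`, where
`ν(δ) = ln(ln(δ^{-1/k})) / ln(T+1)`. -/
theorem exp_carleman_mul_log_pow_tendsto_zero
    (T k τ : ℝ) (hT : 0 < T) (hk : 0 < k) (hτ : τ ∈ Ioo 0 T)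
    (y : ℝ) (hy : 0 < y) :
    Tendsto
      (fun δ : ℝ =>
        exp (-2 * (τ + 1) ^ (Real.log (Real.log (δ ^ (-(1 / k)))) / Real.log (T + 1))) *
          (Real.log (1 / δ)) ^ y)
      (nhdsWithin 0 (Ioi 0)) (nhds 0) :=
  exp_carleman_mul_log_pow_tendsto_zero_general T k τ hk hτ y
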